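/- Let a, b ∈ ℝᴺ be vectors with nonnegative entries, let p > 0, and let M̃ be an N×N contraction (‖M̃‖ ≤ 1) such that M̃ · diag(a) · M̃† = p · diag(b), where diag(a) is the diagonal matrix with diagonal entries a₁,…,a_N. Then p·b is submajorized by a, i.e., p·b ≺_w a. -/

import Mathlib

/-!
Taking squared moduli of the entries of `M̃` turns `M̃ diag(a) M̃† = p diag(b)` into `p b = W a`
with `W i j = ‖M̃ i j‖²`; since `M̃` and `M̃†` are contractions, the rows and columns of `W` have
sums at most `1`. For any set `S` of `k` indices, `∑_{i ∈ S} (W a)_i = ∑_j c_j a_j` with weights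
`c_j ∈ [0, 1]` of total mass at most `k`, and such a fractional choice of entries of `a ≥ 0` is
beaten by its `k` largest entries: above the threshold `t` separating them, `c_j (a_j - t)` gains at
most `a_j - t`, and the rest contributes at most `k t`.
-/

open Matrix

/-- `M` is a contraction: its operator norm (as an operator on `EuclideanSpace ℂ (Fin n)`,
i.e. the l2 operator norm) is at most 1. -/
def IsContraction {n : ℕ} (M : Matrix (Fin n) (Fin n) ℂ) : Prop :=
  ‖Matrix.toEuclideanCLM (𝕜 := ℂ) M‖ ≤ 1

/-- The decreasing rearrangement `x↓` of a vector `x ∈ ℝᴺ`. -/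
noncomputable def decRearrange {N : ℕ} (x : Fin N → ℝ) : Fin N → ℝ :=
  fun i => x (Tuple.sort x i.rev)

/-- `∑_{i=1}^{k} x↓_i`, the sum of the `k` largest entries of `x` (0-indexed: indices `< k`). -/
noncomputable def topSum {N : ℕ} (x : Fin N → ℝ) (k : ℕ) : ℝ :=
  ∑ i ∈ Finset.univ.filter (fun i : Fin N => (i : ℕ) < k), decRearrange x i

/-- `∑_{i=l+1}^{N} x↓_i` (1-indexed), i.e. the sum of `x↓_i` over 0-indexed indices `i ≥ l`. -/
noncomputable def botSum {N : ℕ} (x : Fin N → ℝ) (l : ℕ) : ℝ :=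
  ∑ i ∈ Finset.univ.filter (fun i : Fin N => l ≤ (i : ℕ)), decRearrange x i

/-- `x ≺ y` : `x` is majorized by `y`. -/
noncomputable def IsMajorizedBy {N : ℕ} (x y : Fin N → ℝ) : Prop :=
  (∀ k : ℕ, topSum x k ≤ topSum y k) ∧ (∑ i, x i = ∑ i, y i)

/-- `x ≺_w y` : `x` is submajorized (weakly majorized from below) by `y`. -/
noncomputable def IsSubmajorizedBy {N : ℕ} (x y : Fin N → ℝ) : Prop :=
  ∀ k : ℕ, topSum x k ≤ topSum y k

/-- `x ≺^w y` : `x` is supermajorized (weakly majorized from above) by `y`: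
`∑_{i=l}^{N} x↓_i ≥ ∑_{i=l}^{N} y↓_i` for all `l`. -/
noncomputable def IsSupermajorizedBy {N : ℕ} (x y : Fin N → ℝ) : Prop :=
  ∀ l : ℕ, botSum y l ≤ botSum x l


section FractionalSelection

variable {ι : Type*} [Fintype ι] [DecidableEq ι] (s : Finset ι) (f c : ι → ℝ)

theorem sum_mul_le_sum_of_threshold (t : ℝ)
    (ht : 0 ≤ t) (hs : ∀ i ∈ s, t ≤ f i) (hsc : ∀ i ∉ s, f i ≤ t)
    (hc₀ : ∀ i, 0 ≤ c i) (hc₁ : ∀ i, c i ≤ 1) (hcs : ∑ i, c i ≤ s.card) :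
    ∑ i, c i * f i ≤ ∑ i ∈ s, f i := by
  have hterm : ∀ i, c i * (f i - t) ≤ if i ∈ s then f i - t else 0 := by
    intro i
    split_ifs with hi
    · nlinarith [hs i hi, hc₁ i]
    · nlinarith [hsc i hi, hc₀ i]
  calc ∑ i, c i * f i = ∑ i, c i * (f i - t) + (∑ i, c i) * t := by
        rw [Finset.sum_mul, ← Finset.sum_add_distrib]; ring_nf
    _ ≤ ∑ i, (if i ∈ s then f i - t else 0) + s.card * t := by
        gcongr with i; exact hterm i
    _ = ∑ i ∈ s, f i := by
        rw [Finset.sum_ite_mem, Finset.univ_inter, Finset.sum_sub_distrib, Finset.sum_const,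
          nsmul_eq_mul]
        ring

theorem sum_mul_le_sum_of_forall_le (hf : ∀ i, 0 ≤ f i) (hs : ∀ i ∈ s, ∀ j ∉ s, f j ≤ f i)
    (hc₀ : ∀ i, 0 ≤ c i) (hc₁ : ∀ i, c i ≤ 1) (hcs : ∑ i, c i ≤ s.card) :
    ∑ i, c i * f i ≤ ∑ i ∈ s, f i := by
  by_cases hsc : sᶜ.Nonempty
  · refine sum_mul_le_sum_of_threshold s f c (sᶜ.sup' hsc f) ?_ ?_ ?_ hc₀ hc₁ hcs
    · obtain ⟨j, hj⟩ := hsc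
      exact (hf j).trans (Finset.le_sup' f hj)
    · exact fun i hi => Finset.sup'_le hsc f fun j hj => hs i hi j (Finset.mem_compl.mp hj)
    · exact fun i hi => Finset.le_sup' f (Finset.mem_compl.mpr hi)
  · refine sum_mul_le_sum_of_threshold s f c 0 le_rfl ?_ ?_ hc₀ hc₁ hcs
    · exact fun i _ => hf i
    · exact fun i hi => absurd ⟨i, Finset.mem_compl.mpr hi⟩ hsc

end FractionalSelection

section Rearrangement

variable {N : ℕ}

noncomputable def decRearrangePerm (x : Fin N → ℝ) : Equiv.Perm (Fin N) :=
  Fin.revPerm.trans (Tuple.sort x)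

theorem antitone_decRearrange (x : Fin N → ℝ) : Antitone (decRearrange x) :=
  fun _ _ hij => Tuple.monotone_sort x (Fin.rev_le_rev.mpr hij)

noncomputable def topSet (x : Fin N → ℝ) (k : ℕ) : Finset (Fin N) :=
  (Finset.univ.filter fun i : Fin N => (i : ℕ) < k).map (decRearrangePerm x).toEmbedding

theorem topSum_eq_sum_topSet (x : Fin N → ℝ) (k : ℕ) :
    topSum x k = ∑ i ∈ topSet x k, x i := by
  rw [topSet, Finset.sum_map]; rfl

theorem card_topSet (x : Fin N → ℝ) (k : ℕ) : (topSet x k).card = min N k := by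
  rw [topSet, Finset.card_map, Fin.card_filter_val_lt]

theorem le_of_mem_topSet_of_notMem (x : Fin N → ℝ) (k : ℕ) {i j : Fin N}
    (hi : i ∈ topSet x k) (hj : j ∉ topSet x k) : x j ≤ x i := by
  obtain ⟨i', hi', rfl⟩ := Finset.mem_map.mp hi
  obtain ⟨j', rfl⟩ := (decRearrangePerm x).surjective j
  have hj' : j' ∉ Finset.univ.filter fun i : Fin N => (i : ℕ) < k :=
    fun h => hj (Finset.mem_map_of_mem _ h)
  simp only [Finset.mem_filter, Finset.mem_univ, true_and, not_lt] at hi' hj'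
  exact antitone_decRearrange x (Fin.le_def.mpr (by omega))

theorem sum_mul_le_topSum (a c : Fin N → ℝ) (k : ℕ) (ha : ∀ i, 0 ≤ a i)
    (hc₀ : ∀ i, 0 ≤ c i) (hc₁ : ∀ i, c i ≤ 1) (hck : ∑ i, c i ≤ k) :
    ∑ i, c i * a i ≤ topSum a k := by
  have hcN : ∑ i, c i ≤ N := by
    simpa using Finset.sum_le_sum fun i (_ : i ∈ Finset.univ) => hc₁ i
  rw [topSum_eq_sum_topSet]
  refine sum_mul_le_sum_of_forall_le _ a c ha
    (fun _ hi _ hj => le_of_mem_topSet_of_notMem a k hi hj) hc₀ hc₁ ?_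
  rw [card_topSet, Nat.cast_min]
  exact le_min hcN hck

end Rearrangement

theorem isSubmajorizedBy_mulVec {N : ℕ} (W : Matrix (Fin N) (Fin N) ℝ) (a : Fin N → ℝ)
    (hW : ∀ i j, 0 ≤ W i j) (hrow : ∀ i, ∑ j, W i j ≤ 1) (hcol : ∀ j, ∑ i, W i j ≤ 1)
    (ha : ∀ i, 0 ≤ a i) :
    IsSubmajorizedBy (W *ᵥ a) a := by
  intro k
  set s := topSet (W *ᵥ a) k
  calc topSum (W *ᵥ a) k = ∑ j, (∑ i ∈ s, W i j) * a j := by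
        simp only [topSum_eq_sum_topSet, Matrix.mulVec, dotProduct, Finset.sum_mul]
        exact Finset.sum_comm
    _ ≤ topSum a k := by
        refine sum_mul_le_topSum a _ k ha (fun j => Finset.sum_nonneg fun i _ => hW i j)
          (fun j => (Finset.sum_le_univ_sum_of_nonneg fun i => hW i j).trans (hcol j)) ?_
        calc ∑ j, ∑ i ∈ s, W i j = ∑ i ∈ s, ∑ j, W i j := Finset.sum_comm
          _ ≤ ∑ i ∈ s, 1 := Finset.sum_le_sum fun i _ => hrow i
          _ ≤ k := by simp [s, card_topSet]

namespace IsContraction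

variable {n : ℕ} {M : Matrix (Fin n) (Fin n) ℂ}

open scoped Matrix.Norms.L2Operator in
theorem conjTranspose (hM : IsContraction M) : IsContraction Mᴴ :=
  (Matrix.l2_opNorm_conjTranspose M).trans_le hM

theorem sum_norm_sq_col_le_one (hM : IsContraction M) (j : Fin n) :
    ∑ i, ‖M i j‖ ^ 2 ≤ 1 := by
  have h := (Matrix.toEuclideanCLM (𝕜 := ℂ) M).le_of_opNorm_le hM (WithLp.toLp 2 (Pi.single j 1))
  rw [Matrix.toEuclideanCLM_toLp, Matrix.mulVec_single_one, PiLp.toLp_single, PiLp.norm_single,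
    norm_one, mul_one] at h
  have := pow_le_one₀ (norm_nonneg _) h (n := 2)
  simpa [EuclideanSpace.norm_sq_eq] using this

theorem sum_norm_sq_row_le_one (hM : IsContraction M) (i : Fin n) :
    ∑ j, ‖M i j‖ ^ 2 ≤ 1 := by
  simpa [Matrix.conjTranspose_apply] using hM.conjTranspose.sum_norm_sq_col_le_one i

end IsContraction

theorem mul_diagonal_mul_conjTranspose_apply_self {n : Type*} [Fintype n] [DecidableEq n]
    (M : Matrix n n ℂ) (d : n → ℝ) (i : n) :
    (M * Matrix.diagonal (fun j => (d j : ℂ)) * Mᴴ) i i = ((fun i j => ‖M i j‖ ^ 2) *ᵥ d) i := by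
  rw [Matrix.mul_apply]
  simp only [Matrix.mul_diagonal, Matrix.conjTranspose_apply, Matrix.mulVec, dotProduct,
    Complex.ofReal_sum, Complex.ofReal_mul, Complex.ofReal_pow]
  refine Finset.sum_congr rfl fun j _ => ?_
  rw [Complex.star_def, mul_right_comm, Complex.mul_conj']

theorem submajorized_of_contraction_diag_general {N : ℕ} (a b : Fin N → ℝ)
    (ha : ∀ i, 0 ≤ a i) (p : ℝ)
    (M : Matrix (Fin N) (Fin N) ℂ) (hM : IsContraction M)
    (h : M * Matrix.diagonal (fun i => (a i : ℂ)) * Mᴴ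
        = p • Matrix.diagonal (fun i => (b i : ℂ))) :
    IsSubmajorizedBy (fun i => p * b i) a := by
  have hpb : (fun i => p * b i) = (fun i j => ‖M i j‖ ^ 2 : Matrix (Fin N) (Fin N) ℝ) *ᵥ a := by
    funext i
    apply Complex.ofReal_injective
    rw [← mul_diagonal_mul_conjTranspose_apply_self, h]
    simp
  rw [hpb]
  exact isSubmajorizedBy_mulVec _ a (fun i j => sq_nonneg _) hM.sum_norm_sq_row_le_one
    hM.sum_norm_sq_col_le_one ha

/-- If `a, b ≥ 0`, `p > 0` and a contraction `M̃` satisfies `M̃ diag(a) M̃† = p diag(b)`, then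
`p b ≺_w a`. -/
theorem submajorized_of_contraction_diag {N : ℕ} (a b : Fin N → ℝ)
    (ha : ∀ i, 0 ≤ a i) (hb : ∀ i, 0 ≤ b i) (p : ℝ) (hp : 0 < p)
    (M : Matrix (Fin N) (Fin N) ℂ) (hM : IsContraction M)
    (h : M * Matrix.diagonal (fun i => (a i : ℂ)) * Mᴴ
        = p • Matrix.diagonal (fun i => (b i : ℂ))) :
    IsSubmajorizedBy (fun i => p * b i) a :=
  submajorized_of_contraction_diag_general a b ha p M hM h
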